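/- arXiv:2105.12616 — 2 statements merged into one kernel-verified Lean document; each statement's English description precedes it below -/
import Mathlib

section
/- Let 0 ≤ i < j ≤ n−1. If δ(i) = δ(j), then 2n + e/2 − 2 ≥ (3/2)(i+j) ≥ 2n + e/2 − 4. -/
/-!
Write `c = 2n + e/2`. Consecutive values of `δ` differ by the factor
`δ(u) / δ(u - 1) = (s^(n-u-1) t + 1)(s^(n-u) - 1) / (s^(u+1) - 1)`, which lies strictly
between `s^(c - 3u - 3)` and `s^(c - 3u)`. If `δ(i) = δ(j)`, the factors for `i < u ≤ j`
multiply to `1`, so their base-`s` logarithms sum to `0`; summing the bounds over `u` gives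
`c - 3 < 3(i + j + 1)/2 < c`. Since `2c` and `3(i + j)` are integers, both strict inequalities
improve by one, which is the claim.
-/

open Finset

/-- `t = s^(e/2)` as a real number. -/
noncomputable def tval (s e : ℕ) : ℝ := (s : ℝ) ^ ((e : ℝ) / 2)

/-- `δ(i) = |Δ_i|`, the number of `i`-dimensional singular subspaces of a finite
polar space of rank `n` with orders `(s, …, s, t)`, `t = s^(e/2)`. -/
noncomputable def delta (n s e : ℕ) (i : ℤ) : ℝ :=
  (∏ u ∈ Finset.Icc (0:ℤ) i, ((s:ℝ) ^ ((n:ℤ) - u - 1) * tval s e + 1)) *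
  (∏ u ∈ Finset.Icc (0:ℤ) i, ((s:ℝ) ^ ((n:ℤ) - u) - 1)) /
  (∏ u ∈ Finset.Icc (0:ℤ) i, ((s:ℝ) ^ (u + 1) - 1))

lemma div_le_sub_one_of_two_le {S Y : ℝ} (hS : 2 ≤ S) (hY : S ≤ Y) : Y / S ≤ Y - 1 := by
  rw [div_le_iff₀ (by linarith)]
  nlinarith

lemma mul_div_lt_add_one_mul_sub_one_div {S X Y Z : ℝ} (hS : 2 ≤ S) (hX : 0 < X)
    (hY : S ≤ Y) (hZ : S ≤ Z) : X * Y / (S * Z) < (X + 1) * (Y - 1) / (Z - 1) := by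
  have hYS := div_le_sub_one_of_two_le hS hY
  have hY1 : 0 < Y - 1 := by linarith
  calc X * Y / (S * Z) = X * (Y / S) / Z := by field_simp
    _ < (X + 1) * (Y - 1) / Z := by
      rw [div_lt_div_iff_of_pos_right (by linarith)]
      exact mul_lt_mul_of_lt_of_le_of_nonneg_of_pos (lt_add_one X) hYS hX.le hY1
    _ ≤ (X + 1) * (Y - 1) / (Z - 1) := by gcongr <;> nlinarith

lemma add_one_mul_sub_one_div_lt {S X Y Z : ℝ} (hS : 2 ≤ S) (hX : 1 ≤ X)
    (hY : S ≤ Y) (hZ : S ≤ Z) : (X + 1) * (Y - 1) / (Z - 1) < S ^ 2 * X * Y / Z := by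
  have hZS := div_le_sub_one_of_two_le hS hZ
  calc (X + 1) * (Y - 1) / (Z - 1)
    _ ≤ (S * X) * (Y - 1) / (Z - 1) := by gcongr <;> nlinarith
    _ < (S * X) * Y / (Z - 1) := by gcongr <;> nlinarith
    _ ≤ (S * X) * Y / (Z / S) := by
      have : 0 < S * X * Y := mul_pos (mul_pos (by linarith) (by linarith)) (by linarith)
      gcongr
      exact div_pos (by linarith) (by linarith)
    _ = S ^ 2 * X * Y / Z := by field_simp

noncomputable def deltaFactor (n s e : ℕ) (u : ℤ) : ℝ :=
  ((s:ℝ) ^ ((n:ℤ) - u - 1) * tval s e + 1) * ((s:ℝ) ^ ((n:ℤ) - u) - 1) /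
    ((s:ℝ) ^ (u + 1) - 1)

section delta

variable {n s : ℕ} (e : ℕ)

lemma delta_eq_prod_deltaFactor (i : ℤ) :
    delta n s e i = ∏ u ∈ Icc 0 i, deltaFactor n s e u := by
  simp only [delta, deltaFactor, prod_div_distrib, prod_mul_distrib]

lemma one_le_tval (hs : 1 ≤ s) : 1 ≤ tval s e :=
  Real.one_le_rpow (by exact_mod_cast hs) (by positivity)

lemma deltaFactor_pos (hs : 1 < s) {u : ℤ} (hu : 0 ≤ u) (hun : u ≤ n - 1) :
    0 < deltaFactor n s e u := by
  have hs' : (1:ℝ) < s := by exact_mod_cast hs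
  have hB : (1:ℝ) < (s:ℝ) ^ ((n:ℤ) - u) := one_lt_zpow₀ hs' (by omega)
  have hC : (1:ℝ) < (s:ℝ) ^ (u + 1) := one_lt_zpow₀ hs' (by omega)
  have hA : 0 ≤ (s:ℝ) ^ ((n:ℤ) - u - 1) * tval s e := by unfold tval; positivity
  unfold deltaFactor
  apply div_pos (mul_pos _ _) <;> linarith

lemma delta_pos (hs : 1 < s) {i : ℤ} (hi : i ≤ n - 1) : 0 < delta n s e i := by
  rw [delta_eq_prod_deltaFactor]
  exact prod_pos fun u hu => deltaFactor_pos e hs (mem_Icc.1 hu).1 ((mem_Icc.1 hu).2.trans hi)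

lemma delta_eq_delta_mul_prod_Ioc {i j : ℤ} (hi : 0 ≤ i) (hij : i ≤ j) :
    delta n s e j = delta n s e i * ∏ u ∈ Ioc i j, deltaFactor n s e u := by
  have hunion : Icc 0 i ∪ Ioc i j = Icc 0 j := by
    ext u; simp only [mem_union, mem_Icc, mem_Ioc]; omega
  have hdisj : Disjoint (Icc 0 i) (Ioc i j) :=
    disjoint_left.2 fun u hu hu' => by simp only [mem_Icc, mem_Ioc] at hu hu'; omega
  rw [delta_eq_prod_deltaFactor, delta_eq_prod_deltaFactor, ← hunion, prod_union hdisj]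

lemma logb_zpow_self {b : ℝ} (hb : 1 < b) (k : ℤ) : Real.logb b (b ^ k) = k := by
  rw [← Real.rpow_intCast, Real.logb_rpow (by linarith) hb.ne']

lemma logb_deltaFactor_mem (hs : 2 ≤ s) {u : ℤ} (hu : 0 ≤ u) (hun : u ≤ n - 1) :
    2 * n + (e:ℝ) / 2 - 3 * u - 3 < Real.logb s (deltaFactor n s e u) ∧
      Real.logb s (deltaFactor n s e u) < 2 * n + (e:ℝ) / 2 - 3 * u := by
  have hS : (2:ℝ) ≤ s := by exact_mod_cast hs
  have hS1 : (1:ℝ) < s := by linarith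
  have hself : ∀ k : ℤ, 1 ≤ k → (s:ℝ) ≤ (s:ℝ) ^ k := fun k hk => by
    simpa using zpow_le_zpow_right₀ hS1.le hk
  set X := (s:ℝ) ^ ((n:ℤ) - u - 1) * tval s e with hXdef
  set Y := (s:ℝ) ^ ((n:ℤ) - u)
  set Z := (s:ℝ) ^ (u + 1)
  have hX : 1 ≤ X :=
    one_le_mul_of_one_le_of_one_le (one_le_zpow₀ hS1.le (by omega)) (one_le_tval e (by omega))
  have hY : (s:ℝ) ≤ Y := hself _ (by omega)
  have hZ : (s:ℝ) ≤ Z := hself _ (by omega)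
  have hδ : deltaFactor n s e u = (X + 1) * (Y - 1) / (Z - 1) := rfl
  have hlogX : Real.logb s X = n - u - 1 + e / 2 := by
    rw [hXdef, Real.logb_mul (by positivity) (by unfold tval; positivity), logb_zpow_self hS1,
      tval, Real.logb_rpow (by linarith) hS1.ne']
    push_cast; ring
  have hlogY : Real.logb s Y = n - u := by rw [logb_zpow_self hS1]; push_cast; ring
  have hlogZ : Real.logb s Z = u + 1 := by rw [logb_zpow_self hS1]; push_cast; ring
  have hlogS : Real.logb s s = 1 := Real.logb_self_eq_one hS1
  have hXpos : 0 < X := by linarith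
  have hX0 : X ≠ 0 := hXpos.ne'
  have hY0 : Y ≠ 0 := by positivity
  have hZ0 : Z ≠ 0 := by positivity
  have hS0 : (s:ℝ) ≠ 0 := by positivity
  have hpos : 0 < (X + 1) * (Y - 1) / (Z - 1) := hδ ▸ deltaFactor_pos e (by omega) hu hun
  rw [hδ]
  constructor
  · have := Real.logb_lt_logb hS1 (by positivity)
      (mul_div_lt_add_one_mul_sub_one_div (X := X) hS (by linarith) hY hZ)
    rw [Real.logb_div (by positivity) (by positivity), Real.logb_mul hX0 hY0,
      Real.logb_mul hS0 hZ0, hlogX, hlogY, hlogZ, hlogS] at this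
    linarith
  · have := Real.logb_lt_logb hS1 hpos (add_one_mul_sub_one_div_lt hS hX hY hZ)
    rw [Real.logb_div (by positivity) hZ0, Real.logb_mul (by positivity) hY0,
      Real.logb_mul (by positivity) hX0, Real.logb_pow, hlogX, hlogY, hlogZ, hlogS] at this
    push_cast at this
    linarith

end delta

lemma sum_Ioc_intCast {i j : ℤ} (hij : i ≤ j) :
    ∑ u ∈ Ioc i j, (u:ℝ) = (j - i) * (i + j + 1) / 2 := by
  induction j, hij using Int.leInduction with
  | base => simp
  | succ k hik ih =>
    have hinsert : Ioc i (k + 1) = insert (k + 1) (Ioc i k) := by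
      ext u; simp only [mem_insert, mem_Ioc]; omega
    rw [hinsert, sum_insert (by simp), ih]
    push_cast; ring

lemma sum_Ioc_sub_mul_intCast {i j : ℤ} (hij : i ≤ j) (a c : ℝ) :
    ∑ u ∈ Ioc i j, (c - a * u) = (j - i) * (c - a * (i + j + 1) / 2) := by
  have hcard : (#(Ioc i j) : ℝ) = j - i := by
    rw [Int.card_Ioc, ← Int.cast_natCast, Int.toNat_of_nonneg (by omega), Int.cast_sub]
  rw [sum_sub_distrib, sum_const, nsmul_eq_mul, hcard, ← mul_sum, sum_Ioc_intCast hij]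
  ring

lemma mul_midpoint_mem_of_sum_eq_zero {f : ℤ → ℝ} {a c w : ℝ} {i j : ℤ} (hij : i < j)
    (hf : ∀ u ∈ Ioc i j, c - a * u - w < f u ∧ f u < c - a * u)
    (hsum : ∑ u ∈ Ioc i j, f u = 0) :
    c - w < a * (i + j + 1) / 2 ∧ a * (i + j + 1) / 2 < c := by
  have hne : (Ioc i j).Nonempty := ⟨j, right_mem_Ioc.2 hij⟩
  have hlen : (0:ℝ) < j - i := sub_pos.2 (by exact_mod_cast hij)
  have hlo := sum_lt_sum_of_nonempty hne fun u hu => (hf u hu).1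
  have hhi := sum_lt_sum_of_nonempty hne fun u hu => (hf u hu).2
  simp only [sub_right_comm c, hsum, sum_Ioc_sub_mul_intCast hij.le] at hlo hhi
  constructor
  · nlinarith
  · nlinarith

theorem stmt_4_general (n s e : ℕ) (hs : 2 ≤ s)
    (i j : ℤ) (hi : 0 ≤ i) (hij : i < j) (hj : j ≤ (n:ℤ) - 1)
    (h : delta n s e i = delta n s e j) :
    2 * (n:ℝ) + (e:ℝ)/2 - 2 ≥ (3/2) * ((i:ℝ) + (j:ℝ)) ∧
    (3/2) * ((i:ℝ) + (j:ℝ)) ≥ 2 * (n:ℝ) + (e:ℝ)/2 - 4 := by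
  have hrange : ∀ u ∈ Ioc i j, 0 ≤ u ∧ u ≤ (n:ℤ) - 1 := fun u hu =>
    ⟨by linarith [(mem_Ioc.1 hu).1], (mem_Ioc.1 hu).2.trans hj⟩
  have hprod : ∏ u ∈ Ioc i j, deltaFactor n s e u = 1 := by
    have := delta_eq_delta_mul_prod_Ioc e hi hij.le (n := n) (s := s)
    rwa [← h, eq_comm, mul_eq_left₀ (delta_pos e hs (by omega)).ne'] at this
  have hsum : ∑ u ∈ Ioc i j, Real.logb s (deltaFactor n s e u) = 0 := by
    rw [← Real.logb_prod _ _ fun u hu =>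
      (deltaFactor_pos e hs (hrange u hu).1 (hrange u hu).2).ne', hprod, Real.logb_one]
  obtain ⟨hlo, hhi⟩ := mul_midpoint_mem_of_sum_eq_zero hij
    (fun u hu => logb_deltaFactor_mem e hs (hrange u hu).1 (hrange u hu).2) hsum
  have hlo_int : 4 * (n:ℤ) + e - 9 < 3 * (i + j) := by
    exact_mod_cast (by linarith : (4 * n + e - 9 : ℝ) < 3 * (i + j))
  have hhi_int : 3 * (i + j) < 4 * (n:ℤ) + e - 3 := by
    exact_mod_cast (by linarith : (3 * (i + j) : ℝ) < 4 * n + e - 3)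
  have hle : (3 * (i + j) : ℝ) ≤ 4 * n + e - 4 := by
    exact_mod_cast (by omega : 3 * (i + j) ≤ 4 * (n:ℤ) + e - 4)
  have hge : (4 * n + e - 8 : ℝ) ≤ 3 * (i + j) := by
    exact_mod_cast (by omega : 4 * (n:ℤ) + e - 8 ≤ 3 * (i + j))
  constructor <;> linarith

theorem stmt_4 (n s e : ℕ) (hn : 3 ≤ n) (hs : 2 ≤ s) (he : e ≤ 4)
    (i j : ℤ) (hi : 0 ≤ i) (hij : i < j) (hj : j ≤ (n:ℤ) - 1)
    (h : delta n s e i = delta n s e j) :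
    2 * (n:ℝ) + (e:ℝ)/2 - 2 ≥ (3/2) * ((i:ℝ) + (j:ℝ)) ∧
    (3/2) * ((i:ℝ) + (j:ℝ)) ≥ 2 * (n:ℝ) + (e:ℝ)/2 - 4 :=
  stmt_4_general n s e hs i j hi hij hj h
end

section
/- Suppose n ≥ 5 and let i ≥ 0 be an integer with i < (n−5+e/2)/3. Then κ(i) < κ(i+1). -/
/-!
Write `[x] = s^x - 1` and `f(u) = s^u t + 1`. Since `3i + 4 ≤ n`, both `κ(i)` and `κ(i+1)` are
sums over `k ≥ -1`, and `κ(i+1)` has the extra positive summand `k = i`; so it suffices to compare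
the `k`-th summands. Their quotient is explicit: passing from `i` to `i+1`, `F` trades `f(n-i-2)`
for `f(n-2i+k-3) f(n-2i+k-2)`, and `G` gets multiplied by
`s^(2(i-k)+1) [n-2i+k-2] [n-2i+k-1] [i+2] / ([n-i-1] [i-k+1]²)`.
Each denominator factor is dominated by a numerator factor:
`f(n-i-2) ≤ f(n-2i+k-3) f(n-2i+k-2)` as soon as `n - 3i + 2k - 3 + e/2 ≥ 0`, which at `k = -1`
is the hypothesis on `i`; `[n-i-1] ≤ s^(2(i-k)+1) [n-2i+k-2]`; and `[i-k+1]` is at most both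
`[n-2i+k-1]` and `[i+2]`.
-/

open Finset

/-- `F(i,k) = ∏_{u=n−2i+k−1}^{n−i−2} (s^u·t + 1)`. -/
noncomputable def F (n s e : ℕ) (i k : ℤ) : ℝ :=
  ∏ u ∈ Finset.Icc ((n:ℤ) - 2*i + k - 1) ((n:ℤ) - i - 2), ((s:ℝ) ^ u * tval s e + 1)

/-- `G(i,k) = s^{(i−k)²} · ∏_{v=1}^{k+1} (s^{i−k+v}−1)/(s^v−1)
  · ∏_{v=1}^{i−k} (s^{n−2i+k−1+v}−1)/(s^v−1)`. -/
noncomputable def G (n s : ℕ) (i k : ℤ) : ℝ :=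
  (s:ℝ) ^ ((i - k)^2) *
  (∏ v ∈ Finset.Icc (1:ℤ) (k + 1), ((s:ℝ) ^ (i - k + v) - 1) / ((s:ℝ) ^ v - 1)) *
  (∏ v ∈ Finset.Icc (1:ℤ) (i - k), ((s:ℝ) ^ ((n:ℤ) - 2*i + k - 1 + v) - 1) / ((s:ℝ) ^ v - 1))

/-- `κ(i) = Σ_{k = max(2i−n+1,−1)}^{i−1} F(i,k)·G(i,k)`, the degree of `(Δ_i, ⊥)`. -/
noncomputable def kappa (n s e : ℕ) (i : ℤ) : ℝ :=
  ∑ k ∈ Finset.Icc (max (2*i - (n:ℤ) + 1) (-1)) (i - 1), F n s e i k * G n s i k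

section IntervalProducts

variable {α M : Type*} [CommMonoid M]

lemma prod_Icc_comp_add_left [AddCommMonoid α] [PartialOrder α] [IsOrderedCancelAddMonoid α]
    [ExistsAddOfLE α] [LocallyFiniteOrder α] (f : α → M) (a b c : α) :
    ∏ x ∈ Icc a b, f (c + x) = ∏ x ∈ Icc (c + a) (c + b), f x := by
  rw [← map_add_left_Icc, prod_map]
  rfl

variable [LinearOrder α] [LocallyFiniteOrder α] [AddMonoidWithOne α] [SuccAddOrder α]
  [NoMaxOrder α] {a b : α}

lemma prod_Icc_add_one_eq_prod_Icc_mul (h : a ≤ b + 1) (f : α → M) :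
    ∏ x ∈ Icc a (b + 1), f x = (∏ x ∈ Icc a b, f x) * f (b + 1) := by
  rw [← insert_Icc_right_eq_Icc_add_one h, prod_insert (by simp), mul_comm]

lemma prod_Icc_eq_mul_prod_Icc_add_one (h : a ≤ b) (f : α → M) :
    ∏ x ∈ Icc a b, f x = f a * ∏ x ∈ Icc (a + 1) b, f x := by
  rw [Icc_add_one_left_eq_Ioc, mul_prod_Ioc_eq_prod_Icc h]

lemma prod_Icc_mul_eq_mul_prod_Icc_add_one (h : a ≤ b + 1) (f : α → M) :
    (∏ x ∈ Icc a b, f x) * f (b + 1) = f a * ∏ x ∈ Icc (a + 1) (b + 1), f x := by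
  rw [← prod_Icc_add_one_eq_prod_Icc_mul h, prod_Icc_eq_mul_prod_Icc_add_one h]

lemma prod_Icc_mul_eq_mul_mul_prod_Icc_add_two (h : a ≤ b) (f : α → M) :
    (∏ x ∈ Icc a b, f x) * f (b + 1) = f a * f (a + 1) * ∏ x ∈ Icc (a + 1 + 1) (b + 1), f x := by
  rw [prod_Icc_mul_eq_mul_prod_Icc_add_one (h.trans (Order.lt_add_one_iff.2 le_rfl).le) f,
    prod_Icc_eq_mul_prod_Icc_add_one (by simpa using h), mul_assoc]

end IntervalProducts

section PowerInequalities

variable {x : ℝ}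

lemma zpow_sub_one_pos (hx : 1 < x) {a : ℤ} (ha : 0 < a) : 0 < x ^ a - 1 :=
  sub_pos.2 (one_lt_zpow₀ hx ha)

lemma zpow_sub_one_le_zpow_sub_one (hx : 1 ≤ x) {a b : ℤ} (hab : a ≤ b) :
    x ^ a - 1 ≤ x ^ b - 1 :=
  sub_le_sub_right (zpow_le_zpow_right₀ hx hab) 1

lemma zpow_sub_one_le_zpow_mul (hx : 2 ≤ x) {m a c d : ℤ} (hd : 1 ≤ d) (ham : a ≤ m)
    (h : a + c = m + d) : x ^ m - 1 ≤ x ^ a * (x ^ c - 1) := by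
  have hx1 : 1 ≤ x := by linarith
  have hsplit : x ^ a * x ^ c = x ^ m * x ^ d := by
    rw [← zpow_add₀ (by positivity), ← zpow_add₀ (by positivity), h]
  have hd2 : 2 ≤ x ^ d := hx.trans (by simpa using zpow_le_zpow_right₀ hx1 hd)
  have ham' : x ^ a ≤ x ^ m := zpow_le_zpow_right₀ hx1 ham
  have hm : 0 < x ^ m := by positivity
  rw [mul_sub, mul_one, hsplit]
  nlinarith

end PowerInequalities

lemma zpow_mul_tval {s : ℕ} (hs : 0 < s) (e : ℕ) (u : ℤ) :
    (s : ℝ) ^ u * tval s e = (s : ℝ) ^ ((u : ℝ) + e / 2) := by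
  rw [tval, Real.rpow_add (by positivity), Real.rpow_intCast]

lemma zpow_mul_tval_add_one_le {s : ℕ} (hs : 0 < s) (e : ℕ) {u a b : ℤ}
    (h : (u : ℝ) ≤ a + b + e / 2) :
    (s : ℝ) ^ u * tval s e + 1 ≤ ((s : ℝ) ^ a * tval s e + 1) * ((s : ℝ) ^ b * tval s e + 1) := by
  have key : (s : ℝ) ^ u * tval s e ≤ ((s : ℝ) ^ a * tval s e) * ((s : ℝ) ^ b * tval s e) := by
    rw [zpow_mul_tval hs, zpow_mul_tval hs, zpow_mul_tval hs, ← Real.rpow_add (by positivity)]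
    exact Real.rpow_le_rpow_of_exponent_le (by exact_mod_cast hs) (by linarith)
  have ha : 0 ≤ (s : ℝ) ^ a * tval s e := by unfold tval; positivity
  have hb : 0 ≤ (s : ℝ) ^ b * tval s e := by unfold tval; positivity
  nlinarith

noncomputable def qProd (s : ℕ) (a b : ℤ) : ℝ := ∏ x ∈ Icc a b, ((s : ℝ) ^ x - 1)

lemma qProd_pos {s : ℕ} (hs : 2 ≤ s) {a : ℤ} (ha : 0 < a) (b : ℤ) : 0 < qProd s a b :=
  prod_pos fun x hx => zpow_sub_one_pos (by exact_mod_cast hs) (by rw [mem_Icc] at hx; omega)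

lemma F_pos (n s e : ℕ) (i k : ℤ) : 0 < F n s e i k :=
  prod_pos fun u _ => by unfold tval; positivity

lemma F_succ_mul (n s e : ℕ) {i k : ℤ} (hki : k ≤ i) :
    F n s e (i + 1) k * ((s : ℝ) ^ ((n : ℤ) - i - 2) * tval s e + 1) =
      ((s : ℝ) ^ ((n : ℤ) - 2 * i + k - 3) * tval s e + 1) *
        ((s : ℝ) ^ ((n : ℤ) - 2 * i + k - 2) * tval s e + 1) * F n s e i k := by
  have h := prod_Icc_mul_eq_mul_mul_prod_Icc_add_two (a := (n : ℤ) - 2 * i + k - 3)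
    (b := (n : ℤ) - i - 3) (by omega) fun u => (s : ℝ) ^ u * tval s e + 1
  rw [show (n : ℤ) - 2 * i + k - 3 + 1 + 1 = n - 2 * i + k - 1 by ring,
    show (n : ℤ) - 2 * i + k - 3 + 1 = n - 2 * i + k - 2 by ring,
    show (n : ℤ) - i - 3 + 1 = n - i - 2 by ring] at h
  rw [F, F, ← h]
  congr 3 <;> ring

lemma G_eq_qProd (n s : ℕ) (i k : ℤ) :
    G n s i k = (s : ℝ) ^ ((i - k) ^ 2) * (qProd s (i - k + 1) (i + 1) / qProd s 1 (k + 1)) *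
      (qProd s ((n : ℤ) - 2 * i + k) (n - i - 1) / qProd s 1 (i - k)) := by
  have h₁ := prod_Icc_comp_add_left (fun x => (s : ℝ) ^ x - 1) 1 (k + 1) (i - k)
  have h₂ := prod_Icc_comp_add_left (fun x => (s : ℝ) ^ x - 1) 1 (i - k) (n - 2 * i + k - 1)
  rw [show i - k + (k + 1) = i + 1 by ring] at h₁
  rw [show (n : ℤ) - 2 * i + k - 1 + 1 = n - 2 * i + k by ring,
    show (n : ℤ) - 2 * i + k - 1 + (i - k) = n - i - 1 by ring] at h₂
  rw [G, prod_div_distrib, prod_div_distrib, h₁, h₂, qProd, qProd, qProd, qProd]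

lemma G_pos {n s : ℕ} (hs : 2 ≤ s) {i k : ℤ} (hki : k ≤ i) (hn : 2 * i + 1 ≤ n + k) :
    0 < G n s i k := by
  rw [G_eq_qProd]
  have := qProd_pos hs (a := i - k + 1) (by omega) (i + 1)
  have := qProd_pos hs (a := n - 2 * i + k) (by omega) (n - i - 1)
  have := qProd_pos hs (a := 1) one_pos (k + 1)
  have := qProd_pos hs (a := 1) one_pos (i - k)
  positivity

lemma G_succ_mul {n s : ℕ} (hs : 2 ≤ s) {i k : ℤ} (hk : -1 ≤ k) (hki : k ≤ i) :
    G n s (i + 1) k * (((s : ℝ) ^ ((n : ℤ) - i - 1) - 1) *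
        (((s : ℝ) ^ (i - k + 1) - 1) * ((s : ℝ) ^ (i - k + 1) - 1))) =
      (s : ℝ) ^ (2 * (i - k) + 1) * ((s : ℝ) ^ ((n : ℤ) - 2 * i + k - 2) - 1) *
        (((s : ℝ) ^ ((n : ℤ) - 2 * i + k - 1) - 1) * ((s : ℝ) ^ (i + 1 + 1) - 1)) * G n s i k := by
  have hs' : (1 : ℝ) < s := by exact_mod_cast hs
  have R₁ : qProd s (i - k + 1) (i + 1) * ((s : ℝ) ^ (i + 1 + 1) - 1) =
      ((s : ℝ) ^ (i - k + 1) - 1) * qProd s (i - k + 1 + 1) (i + 1 + 1) :=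
    prod_Icc_mul_eq_mul_prod_Icc_add_one (by omega) _
  have R₂ : qProd s ((n : ℤ) - 2 * i + k - 2) (n - i - 2) * ((s : ℝ) ^ ((n : ℤ) - i - 1) - 1) =
      ((s : ℝ) ^ ((n : ℤ) - 2 * i + k - 2) - 1) * ((s : ℝ) ^ ((n : ℤ) - 2 * i + k - 1) - 1) *
        qProd s ((n : ℤ) - 2 * i + k) (n - i - 1) := by
    have h := prod_Icc_mul_eq_mul_mul_prod_Icc_add_two (a := (n : ℤ) - 2 * i + k - 2)
      (b := (n : ℤ) - i - 2) (by omega) fun x => (s : ℝ) ^ x - 1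
    rwa [show (n : ℤ) - 2 * i + k - 2 + 1 + 1 = n - 2 * i + k by ring,
      show (n : ℤ) - 2 * i + k - 2 + 1 = n - 2 * i + k - 1 by ring,
      show (n : ℤ) - i - 2 + 1 = n - i - 1 by ring] at h
  have hD : qProd s 1 (i - k + 1) = qProd s 1 (i - k) * ((s : ℝ) ^ (i - k + 1) - 1) :=
    prod_Icc_add_one_eq_prod_Icc_mul (by omega) _
  have hpow : (s : ℝ) ^ ((i - k + 1) ^ 2) = (s : ℝ) ^ ((i - k) ^ 2) * (s : ℝ) ^ (2 * (i - k) + 1) := by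
    rw [← zpow_add₀ (by positivity)]
    ring_nf
  have hg := (zpow_sub_one_pos hs' (show 0 < i - k + 1 by omega)).ne'
  have hB := (qProd_pos hs one_pos (k + 1)).ne'
  have hD' := (qProd_pos hs one_pos (i - k)).ne'
  rw [G_eq_qProd, G_eq_qProd, show i + 1 - k = i - k + 1 by ring,
    show (n : ℤ) - 2 * (i + 1) + k = n - 2 * i + k - 2 by ring,
    show (n : ℤ) - (i + 1) - 1 = n - i - 2 by ring, hD, hpow]
  calc _ = (s : ℝ) ^ ((i - k) ^ 2) * (s : ℝ) ^ (2 * (i - k) + 1) *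
          ((((s : ℝ) ^ (i - k + 1) - 1) * qProd s (i - k + 1 + 1) (i + 1 + 1)) *
            (qProd s ((n : ℤ) - 2 * i + k - 2) (n - i - 2) * ((s : ℝ) ^ ((n : ℤ) - i - 1) - 1))) /
          (qProd s 1 (k + 1) * qProd s 1 (i - k)) := by
        field_simp
    _ = _ := by
        rw [← R₁, R₂]
        ring

lemma summand_multiplier_le {n s : ℕ} (e : ℕ) (hs : 2 ≤ s) {i k : ℤ} (hk : -1 ≤ k) (hki : k < i)
    (hn : 3 * i + 4 ≤ n) (he : 0 ≤ (n : ℝ) - 3 * i + 2 * k - 3 + e / 2) :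
    ((s : ℝ) ^ ((n : ℤ) - i - 2) * tval s e + 1) * (((s : ℝ) ^ ((n : ℤ) - i - 1) - 1) *
        (((s : ℝ) ^ (i - k + 1) - 1) * ((s : ℝ) ^ (i - k + 1) - 1))) ≤
      ((s : ℝ) ^ ((n : ℤ) - 2 * i + k - 3) * tval s e + 1) *
          ((s : ℝ) ^ ((n : ℤ) - 2 * i + k - 2) * tval s e + 1) *
        ((s : ℝ) ^ (2 * (i - k) + 1) * ((s : ℝ) ^ ((n : ℤ) - 2 * i + k - 2) - 1) *
          (((s : ℝ) ^ ((n : ℤ) - 2 * i + k - 1) - 1) * ((s : ℝ) ^ (i + 1 + 1) - 1))) := by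
  have hs₁ : (1 : ℝ) < s := by exact_mod_cast hs
  have hs₂ : (2 : ℝ) ≤ s := by exact_mod_cast hs
  have hF : (s : ℝ) ^ ((n : ℤ) - i - 2) * tval s e + 1 ≤
      ((s : ℝ) ^ ((n : ℤ) - 2 * i + k - 3) * tval s e + 1) *
        ((s : ℝ) ^ ((n : ℤ) - 2 * i + k - 2) * tval s e + 1) :=
    zpow_mul_tval_add_one_le (by omega) e (by push_cast; linarith)
  have hN : (s : ℝ) ^ ((n : ℤ) - i - 1) - 1 ≤
      (s : ℝ) ^ (2 * (i - k) + 1) * ((s : ℝ) ^ ((n : ℤ) - 2 * i + k - 2) - 1) :=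
    zpow_sub_one_le_zpow_mul hs₂ (d := i - k) (by omega) (by omega) (by ring)
  have hM₁ : (s : ℝ) ^ (i - k + 1) - 1 ≤ (s : ℝ) ^ ((n : ℤ) - 2 * i + k - 1) - 1 :=
    zpow_sub_one_le_zpow_sub_one hs₁.le (by omega)
  have hM₂ : (s : ℝ) ^ (i - k + 1) - 1 ≤ (s : ℝ) ^ (i + 1 + 1) - 1 :=
    zpow_sub_one_le_zpow_sub_one hs₁.le (by omega)
  have hM₀ := zpow_sub_one_pos hs₁ (show 0 < i - k + 1 by omega)
  have hN₀ := zpow_sub_one_pos hs₁ (show 0 < (n : ℤ) - i - 1 by omega)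
  have hF₀ : 0 ≤ ((s : ℝ) ^ ((n : ℤ) - 2 * i + k - 3) * tval s e + 1) *
      ((s : ℝ) ^ ((n : ℤ) - 2 * i + k - 2) * tval s e + 1) := by
    unfold tval; positivity
  exact mul_le_mul hF (mul_le_mul hN (mul_le_mul hM₁ hM₂ hM₀.le (hM₀.le.trans hM₁)) (by positivity)
    (hN₀.le.trans hN)) (by positivity) hF₀

lemma summand_le_summand_succ {n s : ℕ} (e : ℕ) (hs : 2 ≤ s) {i k : ℤ} (hk : -1 ≤ k)
    (hki : k < i) (hn : 3 * i + 4 ≤ n) (he : 0 ≤ (n : ℝ) - 3 * i + 2 * k - 3 + e / 2) :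
    F n s e i k * G n s i k ≤ F n s e (i + 1) k * G n s (i + 1) k := by
  have hs₁ : (1 : ℝ) < s := by exact_mod_cast hs
  have hA : 0 < ((s : ℝ) ^ ((n : ℤ) - i - 2) * tval s e + 1) * (((s : ℝ) ^ ((n : ℤ) - i - 1) - 1) *
      (((s : ℝ) ^ (i - k + 1) - 1) * ((s : ℝ) ^ (i - k + 1) - 1))) := by
    have := zpow_sub_one_pos hs₁ (show 0 < i - k + 1 by omega)
    have := zpow_sub_one_pos hs₁ (show 0 < (n : ℤ) - i - 1 by omega)
    unfold tval
    positivity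
  have hT : 0 ≤ F n s e i k * G n s i k :=
    (mul_pos (F_pos n s e i k) (G_pos hs hki.le (by omega))).le
  refine le_of_mul_le_mul_right ?_ hA
  calc _ ≤ F n s e i k * G n s i k * _ :=
        mul_le_mul_of_nonneg_left (summand_multiplier_le e hs hk hki hn he) hT
    _ = _ := by
      rw [mul_mul_mul_comm (F n s e (i + 1) k), F_succ_mul n s e hki.le, G_succ_mul hs hk hki.le,
        mul_mul_mul_comm _ (F n s e i k), mul_comm]

lemma kappa_eq_sum_Icc (n s e : ℕ) {i : ℤ} (hi : 2 * i + 2 ≤ n) :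
    kappa n s e i = ∑ k ∈ Icc (-1) (i - 1), F n s e i k * G n s i k := by
  rw [kappa, max_eq_right (by omega)]

theorem stmt_12_general (n s e : ℕ) (hs : 2 ≤ s) (he : e ≤ 4)
    (i : ℤ) (hi : 0 ≤ i) (hi' : (i:ℝ) < ((n:ℝ) - 5 + (e:ℝ)/2) / 3) :
    kappa n s e i < kappa n s e (i + 1) := by
  have heR : (e : ℝ) ≤ 4 := by exact_mod_cast he
  have hn : 3 * i + 4 ≤ n := by
    have : ((3 * i : ℤ) : ℝ) < ((n - 3 : ℤ) : ℝ) := by push_cast; linarith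
    have := Int.cast_lt.1 this
    omega
  have hsplit : Icc (-1) i = insert i (Icc (-1) (i - 1)) := by
    simpa using (insert_Icc_right_eq_Icc_add_one (show -1 ≤ i - 1 + 1 by omega)).symm
  rw [kappa_eq_sum_Icc n s e (by omega), kappa_eq_sum_Icc n s e (by omega), add_sub_cancel_right,
    hsplit, sum_insert (by simp)]
  refine lt_add_of_pos_of_le (mul_pos (F_pos n s e _ i) (G_pos hs (by omega) (by omega)))
    (sum_le_sum fun k hk => ?_)
  rw [mem_Icc] at hk
  have hk₁ : (-1 : ℝ) ≤ k := by exact_mod_cast hk.1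
  exact summand_le_summand_succ e hs hk.1 (by omega) hn (by linarith)

theorem stmt_12 (n s e : ℕ) (hn : 5 ≤ n) (hs : 2 ≤ s) (he : e ≤ 4)
    (i : ℤ) (hi : 0 ≤ i) (hi' : (i:ℝ) < ((n:ℝ) - 5 + (e:ℝ)/2) / 3) :
    kappa n s e i < kappa n s e (i + 1) :=
  stmt_12_general n s e hs he i hi hi'
end
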